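/- arXiv:1610.06284 — 4 statements merged into one kernel-verified Lean document; each statement's English description precedes it below -/
import Mathlib

section
/- For a commutative ring R, variables X_1,...,X_n, A_2,...,A_n, and C in R, the n×n determinant det[ ∏_{k=j+1}^{n} (X_i - A_k - C)(X_i + A_k) ]_{1≤i,j≤n} equals ∏_{1≤i<j≤n} (X_j - X_i)(C - X_i - X_j). (Here for j = n the entry is the empty product, i.e. 1.) -/
open Finset Polynomial

/-- Reindexing a product over pairs `i < j` by reversing both indices. -/
lemma prod_Ioi_rev {R : Type*} [CommMonoid R] {n : ℕ} (f : Fin n → Fin n → R) :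
    (∏ i : Fin n, ∏ j ∈ Finset.Ioi i, f (Fin.rev j) (Fin.rev i)) =
      ∏ i : Fin n, ∏ j ∈ Finset.Ioi i, f i j := by
  rw [Finset.prod_sigma' Finset.univ (fun i => Finset.Ioi i)
      (fun i j => f (Fin.rev j) (Fin.rev i)),
    Finset.prod_sigma' Finset.univ (fun i => Finset.Ioi i) (fun i j => f i j)]
  refine Finset.prod_nbij' (fun p => ⟨Fin.rev p.2, Fin.rev p.1⟩)
    (fun p => ⟨Fin.rev p.2, Fin.rev p.1⟩) ?_ ?_ ?_ ?_ ?_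
  · rintro ⟨i, j⟩ h
    simp only [Finset.mem_sigma, Finset.mem_univ, Finset.mem_Ioi, true_and] at h ⊢
    exact Fin.rev_lt_rev.mpr h
  · rintro ⟨i, j⟩ h
    simp only [Finset.mem_sigma, Finset.mem_univ, Finset.mem_Ioi, true_and] at h ⊢
    exact Fin.rev_lt_rev.mpr h
  · rintro ⟨i, j⟩ _; simp [Fin.rev_rev]
  · rintro ⟨i, j⟩ _; simp [Fin.rev_rev]
  · rintro ⟨i, j⟩ _; simp

/-- Krattenthaler's determinant identity: for a commutative ring `R`,
`det [∏_{k=j+1}^{n} (X_i - A_k - C)(X_i + A_k)] = ∏_{i<j} (X_j - X_i)(C - X_i - X_j)`. -/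
theorem krattenthaler_det (R : Type*) [CommRing R] (n : ℕ) (X A : Fin n → R) (C : R) :
    Matrix.det (Matrix.of fun i j : Fin n =>
        ∏ k ∈ Finset.Ioi j, ((X i - A k - C) * (X i + A k))) =
      ∏ i : Fin n, ∏ j ∈ Finset.Ioi i, ((X j - X i) * (C - X i - X j)) := by
  rcases subsingleton_or_nontrivial R with hR | hR
  · exact Subsingleton.elim _ _
  set Y : Fin n → R := fun i => X i * X i - C * X i with hY
  set B : Fin n → R := fun k => A k * A k + C * A k with hB
  set q : Fin n → R[X] := fun j => ∏ k ∈ Finset.Ioi j, (Polynomial.X - Polynomial.C (B k))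
    with hq
  have hq_monic : ∀ j, (q j).Monic := fun j =>
    monic_prod_of_monic _ _ fun k _ => monic_X_sub_C (B k)
  have hq_deg : ∀ j, (q j).natDegree = n - 1 - (j : ℕ) := by
    intro j
    rw [hq]
    rw [Polynomial.natDegree_prod_of_monic _ _ (fun k _ => monic_X_sub_C (B k))]
    simp [Polynomial.natDegree_X_sub_C, Fin.card_Ioi]
  -- the entries are `(q j).eval (Y i)`
  have hentry : ∀ i j : Fin n,
      (∏ k ∈ Finset.Ioi j, ((X i - A k - C) * (X i + A k))) = (q j).eval (Y i) := by
    intro i j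
    rw [hq, Polynomial.eval_prod]
    refine Finset.prod_congr rfl fun k _ => ?_
    simp only [Polynomial.eval_sub, Polynomial.eval_X, Polynomial.eval_C, hY, hB]
    ring
  have hmat : (Matrix.of fun i j : Fin n =>
      ∏ k ∈ Finset.Ioi j, ((X i - A k - C) * (X i + A k))) =
      ((Matrix.of fun i j : Fin n => (q (Fin.rev j)).eval (Y (Fin.rev i))).submatrix
        Fin.revPerm Fin.revPerm) := by
    ext i j
    simp [hentry i j, Fin.rev_rev]
  rw [hmat, Matrix.det_submatrix_equiv_self]
  have hp_deg : ∀ j : Fin n, (q (Fin.rev j)).natDegree = (j : ℕ) := by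
    intro j
    rw [hq_deg, Fin.val_rev]
    omega
  rw [show (Matrix.of fun i j : Fin n => (q (Fin.rev j)).eval (Y (Fin.rev i))) =
      (Matrix.of fun i j : Fin n => ((fun j => q (Fin.rev j)) j).eval ((Y ∘ Fin.rev) i))
      from rfl]
  rw [← Matrix.det_eval_matrixOfPolynomials_eq_det_vandermonde (Y ∘ Fin.rev)
      (fun j => q (Fin.rev j)) hp_deg (fun j => hq_monic _)]
  rw [Matrix.det_vandermonde]
  have := prod_Ioi_rev (n := n) (fun i j => Y i - Y j)
  simp only [Function.comp] at this ⊢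
  rw [this]
  refine Finset.prod_congr rfl fun i _ => Finset.prod_congr rfl fun j _ => ?_
  simp only [hY]
  ring
end

section
/- Let (x)_n denote the ascending factorial. Let c be a rational number, and let m ≥ 1 and N be natural numbers with N ≥ 4m + 2. Then ∏_{i=1}^{m} (c + 2i)_{N-4i-1} · ∏_{i=1}^{m-1} (c + 2i)_{N-4i-1} · (c + N - 3)(c + N - 2) = ∏_{i=1}^{m} (c + 2i)_{N-4i+1} · ∏_{i=1}^{m-1} (c + 2i)_{N-4i-3}. -/
/-- The ascending factorial (Pochhammer symbol) `(x)_n = x(x+1)⋯(x+n-1)`. -/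
def poch (x : ℚ) (n : ℕ) : ℚ := ∏ i ∈ Finset.range n, (x + i)

lemma poch_add_two (x : ℚ) (n : ℕ) :
    poch x (n + 2) = poch x n * (x + n) * (x + n + 1) := by
  unfold poch
  rw [Finset.prod_range_succ, Finset.prod_range_succ]
  push_cast
  ring

/-- Telescoping Pochhammer identity for the `f`-factor ratio:
`∏_{i=1}^{m} (c+2i)_{N-4i-1} · ∏_{i=1}^{m-1} (c+2i)_{N-4i-1} · (c+N-3)(c+N-2)
  = ∏_{i=1}^{m} (c+2i)_{N-4i+1} · ∏_{i=1}^{m-1} (c+2i)_{N-4i-3}`. -/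
theorem poch_telescope (c : ℚ) (m N : ℕ) (hm : 1 ≤ m) (hN : 4 * m + 2 ≤ N) :
    (∏ i ∈ Finset.Icc 1 m, poch (c + 2 * i) (N - 4 * i - 1)) *
        (∏ i ∈ Finset.Icc 1 (m - 1), poch (c + 2 * i) (N - 4 * i - 1)) *
        ((c + N - 3) * (c + N - 2)) =
      (∏ i ∈ Finset.Icc 1 m, poch (c + 2 * i) (N - 4 * i + 1)) *
        ∏ i ∈ Finset.Icc 1 (m - 1), poch (c + 2 * i) (N - 4 * i - 3) := by
  induction m, hm using Nat.le_induction with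
  | base =>
    obtain ⟨K, rfl⟩ : ∃ K, N = K + 6 := ⟨N - 6, by omega⟩
    simp only [Finset.Icc_self, Finset.prod_singleton, Nat.sub_self, Finset.Icc_eq_empty_of_lt,
      Nat.lt_irrefl, Finset.Icc_eq_empty (by norm_num : ¬(1:ℕ) ≤ 0), Finset.prod_empty]
    have h1 : K + 6 - 4 * 1 - 1 = K + 1 := by omega
    have h2 : K + 6 - 4 * 1 + 1 = (K + 1) + 2 := by omega
    rw [h1, h2, poch_add_two]
    push_cast
    ring
  | succ m hm ih =>
    obtain ⟨p, rfl⟩ : ∃ p, m = p + 1 := ⟨m - 1, by omega⟩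
    have hN' : 4 * (p + 1) + 2 ≤ N := by omega
    obtain ⟨K, rfl⟩ : ∃ K, N = K + 4 * p + 10 := ⟨N - (4 * p + 10), by omega⟩
    specialize ih hN'
    simp only [Nat.add_sub_cancel] at ih
    rw [Finset.prod_Icc_succ_top (by omega : 1 ≤ p + 1 + 1),
        Finset.prod_Icc_succ_top (by omega : 1 ≤ p + 1 + 1)]
    have hmm : p + 1 + 1 - 1 = p + 1 := by omega
    rw [hmm]
    rw [Finset.prod_Icc_succ_top (by omega : 1 ≤ p + 1)
          (f := fun i => poch (c + 2 * i) (K + 4 * p + 10 - 4 * i - 1)),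
        Finset.prod_Icc_succ_top (by omega : 1 ≤ p + 1)
          (f := fun i => poch (c + 2 * i) (K + 4 * p + 10 - 4 * i - 3))]
    have e1 : K + 4 * p + 10 - 4 * (p + 1 + 1) - 1 = K + 1 := by omega
    have e2 : K + 4 * p + 10 - 4 * (p + 1 + 1) + 1 = (K + 1) + 2 := by omega
    have e3 : K + 4 * p + 10 - 4 * (p + 1) - 1 = (K + 3) + 2 := by omega
    have e4 : K + 4 * p + 10 - 4 * (p + 1) - 3 = K + 3 := by omega
    rw [e1, e2, e3, e4]
    have key : poch (c + 2 * (p + 1 + 1 : ℕ)) (K + 1) * poch (c + 2 * (p + 1 : ℕ)) ((K + 3) + 2) =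
        poch (c + 2 * (p + 1 + 1 : ℕ)) ((K + 1) + 2) * poch (c + 2 * (p + 1 : ℕ)) (K + 3) := by
      rw [poch_add_two (c + 2 * (p + 1 + 1 : ℕ)) (K + 1),
          poch_add_two (c + 2 * (p + 1 : ℕ)) (K + 3)]
      push_cast
      ring
    rw [Finset.prod_Icc_succ_top (by omega : 1 ≤ p + 1)
          (f := fun i => poch (c + 2 * i) (K + 4 * p + 10 - 4 * i - 1)), e3] at ih
    linear_combination
      (poch (c + 2 * (p + 1 : ℕ)) ((K + 3) + 2) * poch (c + 2 * (p + 1 + 1 : ℕ)) (K + 1)) * ih +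
      ((∏ i ∈ Finset.Icc 1 (p + 1), poch (c + 2 * i) (K + 4 * p + 10 - 4 * i + 1)) *
        ∏ i ∈ Finset.Icc 1 p, poch (c + 2 * i) (K + 4 * p + 10 - 4 * i - 3)) * key
end

section
/- Let k ≥ 1, n ≥ k, and 1 ≤ a_1 < a_2 < ⋯ < a_k ≤ n be integers. Then the quantity (a_1 a_2 ⋯ a_k / H_2(2k+1)) · ∏_{1≤i<j≤k}(a_j - a_i) · ∏_{1≤i<j≤k}(a_i + a_j) is a nonnegative integer, where H_2(2k+1) = 1!·3!·5!⋯(2k-1)!. -/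
/-!
Since `(2j+1)! · C(c+j, 2j+1) = (c+j)(c+j-1)⋯(c-j) = c · ∏_{t<j} (c² - (t+1)²)` is `c` times a
monic polynomial of degree `j` in `c²`, multiplying the `j`-th column of the integer matrix
`(C(c_i + j, 2j+1))_{i,j<k}` by `(2j+1)!` gives, by column reduction, `∏ c_i` times the
Vandermonde determinant of the `c_i²`. Hence the quantity is the determinant of that integer
matrix, and it is nonnegative because `∏_{i<j} (c_j² - c_i²) ≥ 0` for increasing `c`.
-/

/-- `H₂(2k+1) = 1!·3!·5!⋯(2k-1)! = ∏_{j=1}^{k} (2j-1)!`. -/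
def H2odd (k : ℕ) : ℕ := ∏ j ∈ Finset.Icc 1 k, Nat.factorial (2 * j - 1)

open Finset Polynomial Matrix Nat

lemma H2odd_eq_prod_range (k : ℕ) : H2odd k = ∏ j ∈ range k, (2 * j + 1)! := by
  induction k with
  | zero => rfl
  | succ k ih => rw [H2odd, prod_Icc_succ_top (by omega), ← H2odd, ih, prod_range_succ]; rfl

lemma H2odd_pos (k : ℕ) : 0 < H2odd k := prod_pos fun _ _ => factorial_pos _

lemma prod_range_add_sub_eq_mul_prod_sq_sub {R : Type*} [CommRing R] (x : R) (j : ℕ) :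
    ∏ s ∈ range (2 * j + 1), (x + j - s) = x * ∏ t ∈ range j, (x ^ 2 - ((t : R) + 1) ^ 2) := by
  induction j with
  | zero => simp
  | succ j ih =>
    have hshift (s : ℕ) : x + ↑(j + 1) - ↑(s + 1) = x + j - s := by push_cast; ring
    rw [show 2 * (j + 1) + 1 = 2 * j + 1 + 1 + 1 by ring, prod_range_succ, prod_range_succ',
      prod_congr rfl fun s _ => hshift s, ih, prod_range_succ]
    push_cast
    ring

lemma choose_mul_factorial_eq_mul_prod_sq_sub (c j : ℕ) :
    ((c + j).choose (2 * j + 1) : ℤ) * (2 * j + 1)! =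
      c * ∏ t ∈ range j, ((c : ℤ) ^ 2 - ((t : ℤ) + 1) ^ 2) := by
  rw [← prod_range_add_sub_eq_mul_prod_sq_sub, ← Nat.cast_add,
    ← descPochhammer_eval_eq_prod_range, descPochhammer_eval_eq_descFactorial, descFactorial_eq_factorial_mul_choose]
  push_cast
  ring

theorem Matrix.det_of_prod_range_sub {R : Type*} [CommRing R] {k : ℕ} (x : Fin k → R)
    (d : ℕ → R) :
    (of fun i j : Fin k => ∏ t ∈ range j, (x i - d t)).det = ∏ i, ∏ j ∈ Ioi i, (x j - x i) := by
  nontriviality R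
  have hmonic (j : Fin k) : (∏ t ∈ range j, (X - C (d t))).Monic :=
    monic_prod_of_monic _ _ fun t _ => monic_X_sub_C _
  have hdeg (j : Fin k) : (∏ t ∈ range j, (X - C (d t))).natDegree = (j : ℕ) := by
    simp [natDegree_prod_of_monic _ _ fun t _ => monic_X_sub_C (d t)]
  rw [← det_vandermonde, det_eval_matrixOfPolynomials_eq_det_vandermonde x _ hdeg hmonic]
  simp [eval_prod]

theorem det_choose_mul_H2odd {k : ℕ} (c : Fin k → ℕ) :
    (of fun i j : Fin k => ((c i + j).choose (2 * j + 1) : ℤ)).det * H2odd k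
      = (∏ i, (c i : ℤ)) * ∏ i, ∏ j ∈ Ioi i, ((c j : ℤ) ^ 2 - (c i : ℤ) ^ 2) := by
  rw [H2odd_eq_prod_range, Nat.cast_prod, ← Fin.prod_univ_eq_prod_range, mul_comm, ← det_mul_row,
    ← det_of_prod_range_sub _ fun t => ((t : ℤ) + 1) ^ 2, ← det_mul_column]
  congr 1
  ext i j
  simp only [of_apply, mul_comm ((2 * (j : ℕ) + 1)! : ℤ), choose_mul_factorial_eq_mul_prod_sq_sub]

theorem quartered_hexagon_integer_general (k : ℕ)
    (a : Fin k → ℤ) (ha1 : ∀ i, 1 ≤ a i) (hmono : StrictMono a) :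
    ∃ m : ℕ,
      ((∏ i, (a i : ℚ)) / (H2odd k : ℚ)) *
          (∏ i : Fin k, ∏ j ∈ Finset.Ioi i, ((a j : ℚ) - (a i : ℚ))) *
          (∏ i : Fin k, ∏ j ∈ Finset.Ioi i, ((a i : ℚ) + (a j : ℚ))) = (m : ℚ) := by
  have ha (i : Fin k) : ((a i).toNat : ℤ) = a i := Int.toNat_of_nonneg (by linarith [ha1 i])
  set D := (of fun i j : Fin k => (((a i).toNat + j).choose (2 * j + 1) : ℤ)).det
  have hD : D * H2odd k =
      (∏ i, a i) * (∏ i, ∏ j ∈ Ioi i, (a j - a i)) * ∏ i, ∏ j ∈ Ioi i, (a i + a j) := by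
    simp only [D, det_choose_mul_H2odd, ha, mul_assoc, ← prod_mul_distrib]
    congr! 3 with i _ j _
    ring
  have hD_nonneg : 0 ≤ D := by
    refine nonneg_of_mul_nonneg_left (b := (H2odd k : ℤ)) ?_ (mod_cast H2odd_pos k)
    rw [hD]
    refine mul_nonneg (mul_nonneg ?_ ?_) ?_
    · exact prod_nonneg fun i _ => by linarith [ha1 i]
    · exact prod_nonneg fun i _ => prod_nonneg fun j hj => by linarith [hmono (mem_Ioi.mp hj)]
    · exact prod_nonneg fun i _ => prod_nonneg fun j _ => by linarith [ha1 i, ha1 j]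
  refine ⟨D.toNat, ?_⟩
  have hDq : (D.toNat : ℚ) * H2odd k =
      (∏ i, (a i : ℚ)) * (∏ i, ∏ j ∈ Ioi i, ((a j : ℚ) - a i)) *
        ∏ i, ∏ j ∈ Ioi i, ((a i : ℚ) + a j) := by
    rw [← Int.cast_natCast D.toNat, Int.toNat_of_nonneg hD_nonneg]
    exact_mod_cast hD
  rw [div_mul_eq_mul_div, div_mul_eq_mul_div, div_eq_iff (mod_cast (H2odd_pos k).ne'), hDq]

/-- For `1 ≤ a_1 < ⋯ < a_k ≤ n` (with `k ≤ n`), the quantity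
`(a_1⋯a_k / H₂(2k+1)) ∏_{i<j}(a_j - a_i) ∏_{i<j}(a_i + a_j)` is a nonnegative integer. -/
theorem quartered_hexagon_integer (k n : ℕ) (hk : 1 ≤ k) (hkn : k ≤ n)
    (a : Fin k → ℤ) (ha1 : ∀ i, 1 ≤ a i) (han : ∀ i, a i ≤ n) (hmono : StrictMono a) :
    ∃ m : ℕ,
      ((∏ i, (a i : ℚ)) / (H2odd k : ℚ)) *
          (∏ i : Fin k, ∏ j ∈ Finset.Ioi i, ((a j : ℚ) - (a i : ℚ))) *
          (∏ i : Fin k, ∏ j ∈ Finset.Ioi i, ((a i : ℚ) + (a j : ℚ))) = (m : ℚ) :=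
  quartered_hexagon_integer_general k a ha1 hmono
end

section
/- Let k ≥ 1 and 1 ≤ a_1 < a_2 < ⋯ < a_k be integers. Then the quantity (1/H_2(2k)) · ∏_{1≤i<j≤k}(a_j - a_i) · ∏_{1≤i<j≤k}(a_i + a_j - 1) is a nonnegative integer, where H_2(2k) = 0!·2!·4!⋯(2k-2)!. -/
/-!
Put `b_i = a_i (a_i - 1)`, so that `(a_j - a_i)(a_i + a_j - 1) = b_j - b_i` and the product is the
Vandermonde determinant of the `b_i`. Replacing the monomial columns `x^j` by the monic polynomials
`q_j(x) = ∏_{t<j} (x - t(t+1))` (`oblongPoly j`) leaves the determinant unchanged, and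
`q_j(a(a-1)) = (a+j-1)(a+j-2)⋯(a-j)` is a product of `2j` consecutive integers, hence divisible by
`(2j)!`. Pulling these factors out of the columns shows that `∏_{j<k} (2j)! = H₂(2k)` divides the
Vandermonde determinant.
-/

open Finset Polynomial Matrix

/-- `H₂(2k) = 0!·2!·4!⋯(2k-2)! = ∏_{j=1}^{k} (2j-2)!`. -/
def H2even (k : ℕ) : ℕ := ∏ j ∈ Finset.Icc 1 k, Nat.factorial (2 * j - 2)

lemma H2even_eq_prod_fin (k : ℕ) : H2even k = ∏ j : Fin k, (2 * (j : ℕ)).factorial := by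
  rw [H2even, Fin.prod_univ_eq_prod_range (fun j => (2 * j).factorial),
    show Icc 1 k = Ico 1 (k + 1) from rfl, prod_Ico_eq_prod_range]
  exact prod_congr rfl fun j _ => by congr 1; omega

lemma H2even_pos (k : ℕ) : 0 < H2even k := by
  rw [H2even_eq_prod_fin]
  exact prod_pos fun j _ => Nat.factorial_pos _

lemma factorial_dvd_descPochhammer_eval (n : ℕ) (r : ℤ) :
    (n.factorial : ℤ) ∣ (descPochhammer ℤ n).eval r := by
  rw [eval_eq_smeval, Ring.descPochhammer_eq_factorial_smul_choose, nsmul_eq_mul]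
  exact dvd_mul_right _ _

noncomputable def oblongPoly (j : ℕ) : ℤ[X] :=
  ∏ t ∈ range j, (X - C ((t : ℤ) * (t + 1)))

lemma oblongPoly_monic (j : ℕ) : (oblongPoly j).Monic :=
  monic_prod_of_monic _ _ fun _ _ => monic_X_sub_C _

lemma oblongPoly_natDegree (j : ℕ) : (oblongPoly j).natDegree = j := by
  rw [oblongPoly, natDegree_prod_of_monic _ _ fun _ _ => monic_X_sub_C _,
    sum_congr rfl fun _ _ => natDegree_X_sub_C _, sum_const, card_range, smul_eq_mul, mul_one]

lemma oblongPoly_eval_mul_sub_one (j : ℕ) (a : ℤ) :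
    (oblongPoly j).eval (a * (a - 1)) = (descPochhammer ℤ (2 * j)).eval (a + j - 1) := by
  rw [oblongPoly, eval_prod, descPochhammer_eval_eq_prod_range]
  induction j with
  | zero => simp
  | succ j ih =>
    rw [prod_range_succ, ih, show 2 * (j + 1) = 2 * j + 1 + 1 by ring, prod_range_succ',
      prod_range_succ]
    simp only [eval_sub, eval_X, eval_C]
    push_cast
    ring_nf

lemma factorial_dvd_oblongPoly_eval_mul_sub_one (j : ℕ) (a : ℤ) :
    ((2 * j).factorial : ℤ) ∣ (oblongPoly j).eval (a * (a - 1)) := by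
  rw [oblongPoly_eval_mul_sub_one]
  exact factorial_dvd_descPochhammer_eval _ _

theorem H2even_dvd_prod_sub_mul_sub_one {k : ℕ} (a : Fin k → ℤ) :
    (H2even k : ℤ) ∣ ∏ i : Fin k, ∏ j ∈ Ioi i, (a j * (a j - 1) - a i * (a i - 1)) := by
  set b : Fin k → ℤ := fun i => a i * (a i - 1)
  set N : Matrix (Fin k) (Fin k) ℤ :=
    of fun i j => (oblongPoly (j : ℕ)).eval (b i) / ((2 * (j : ℕ)).factorial : ℤ)
  have h_cols : (of fun i j => (oblongPoly (j : ℕ)).eval (b i) : Matrix (Fin k) (Fin k) ℤ) =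
      of fun i (j : Fin k) => ((2 * (j : ℕ)).factorial : ℤ) * N i j := by
    ext i j
    simp only [N, of_apply]
    rw [Int.mul_ediv_cancel' (factorial_dvd_oblongPoly_eval_mul_sub_one _ _)]
  have h_det := det_eval_matrixOfPolynomials_eq_det_vandermonde b (fun j => oblongPoly j)
    (fun j => oblongPoly_natDegree j) (fun j => oblongPoly_monic j)
  rw [det_vandermonde, h_cols, det_mul_row] at h_det
  rw [h_det, H2even_eq_prod_fin]
  push_cast
  exact dvd_mul_right _ _

lemma prod_sub_mul_prod_add_sub_one {R : Type*} [CommRing R] {k : ℕ} (a : Fin k → R) :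
    (∏ i : Fin k, ∏ j ∈ Ioi i, (a j - a i)) * ∏ i : Fin k, ∏ j ∈ Ioi i, (a i + a j - 1) =
      ∏ i : Fin k, ∏ j ∈ Ioi i, (a j * (a j - 1) - a i * (a i - 1)) := by
  rw [← prod_mul_distrib]
  refine prod_congr rfl fun i _ => ?_
  rw [← prod_mul_distrib]
  exact prod_congr rfl fun j _ => by ring

theorem quartered_hexagon_integer_odd_general (k : ℕ)
    (a : Fin k → ℤ) (ha1 : ∀ i, 1 ≤ a i) (hmono : StrictMono a) :
    ∃ m : ℕ,
      (1 / (H2even k : ℚ)) *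
          (∏ i : Fin k, ∏ j ∈ Finset.Ioi i, ((a j : ℚ) - (a i : ℚ))) *
          (∏ i : Fin k, ∏ j ∈ Finset.Ioi i, ((a i : ℚ) + (a j : ℚ) - 1)) = (m : ℚ) := by
  obtain ⟨m, hm⟩ := H2even_dvd_prod_sub_mul_sub_one a
  have h_pos : 0 < ∏ i : Fin k, ∏ j ∈ Ioi i, (a j * (a j - 1) - a i * (a i - 1)) :=
    prod_pos fun i _ => prod_pos fun j hj => by
      have h_lt := hmono (mem_Ioi.mp hj)
      nlinarith [ha1 i]
  lift m to ℕ using (pos_of_mul_pos_right (hm ▸ h_pos) (Int.natCast_nonneg _)).le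
  refine ⟨m, ?_⟩
  have h_cast := congrArg (Int.cast : ℤ → ℚ) hm
  push_cast at h_cast
  rw [mul_assoc, prod_sub_mul_prod_add_sub_one, h_cast, one_div,
    inv_mul_cancel_left₀ (mod_cast (H2even_pos k).ne')]

/-- For `1 ≤ a_1 < ⋯ < a_k`, the quantity
`(1/H₂(2k)) ∏_{i<j}(a_j - a_i) ∏_{i<j}(a_i + a_j - 1)` is a nonnegative integer. -/
theorem quartered_hexagon_integer_odd (k : ℕ) (hk : 1 ≤ k)
    (a : Fin k → ℤ) (ha1 : ∀ i, 1 ≤ a i) (hmono : StrictMono a) :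
    ∃ m : ℕ,
      (1 / (H2even k : ℚ)) *
          (∏ i : Fin k, ∏ j ∈ Finset.Ioi i, ((a j : ℚ) - (a i : ℚ))) *
          (∏ i : Fin k, ∏ j ∈ Finset.Ioi i, ((a i : ℚ) + (a j : ℚ) - 1)) = (m : ℚ) :=
  quartered_hexagon_integer_odd_general k a ha1 hmono
end
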